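/- Let (λ, μ) be a solution of the S-unit equation λ + μ = 1 with λ, μ ∈ O_S*. Then λ ∈ ℚ (equivalently μ ∈ ℚ) if and only if λ ∈ {2, −1, 1/2}, i.e. if and only if (λ, μ) belongs to the single 𝔖₃-orbit consisting of (2, −1), (−1, 2) and (1/2, 1/2). -/

import Mathlib

open NumberField

/-- `x ∈ K` is an `S`-unit, where `S` is the set of prime ideals of `𝓞 K` dividing `N`:
`x ≠ 0` and the valuation of `x` is trivial at every prime ideal not dividing `N`. -/
def IsSUnit {K : Type*} [Field K] [NumberField K] (N : 𝓞 K) (x : K) : Prop :=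
  x ≠ 0 ∧ ∀ P : IsDedekindDomain.HeightOneSpectrum (𝓞 K),
    N ∉ P.asIdeal → P.valuation (K := K) x = 1

section Auxiliary

theorem pow_even_mod8 (q k : ℕ) (hq5 : q % 8 = 5) : q ^ (2*k) % 8 = 1 := by
  have h2 : q ^ 2 % 8 = 1 := by rw [Nat.pow_mod, hq5]
  rw [pow_mul, Nat.pow_mod, h2, one_pow]; omega

theorem pow_odd_mod8 (q k : ℕ) (hq5 : q % 8 = 5) : q ^ (2*k+1) % 8 = 5 := by
  have h1 : q ^ (2*k) % 8 = 1 := pow_even_mod8 q k hq5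
  rw [pow_succ, Nat.mul_mod, h1, one_mul, Nat.mod_mod_of_dvd _ dvd_rfl, hq5]

theorem E1 (q : ℕ) (hq29 : 29 ≤ q) (hq5 : q % 8 = 5) (b c : ℕ) (hb : 1 ≤ b)
    (h : q ^ b = 2 ^ c + 1) : False := by
  have hqb : 29 ≤ q ^ b := le_trans hq29 (Nat.le_self_pow (by omega) q)
  have hc : 5 ≤ c := by
    by_contra hc
    interval_cases c <;> omega
  have h8 : 2 ^ c % 8 = 0 := by
    obtain ⟨j, rfl⟩ : ∃ j, c = j + 3 := ⟨c - 3, by omega⟩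
    rw [pow_add]; omega
  rcases Nat.even_or_odd b with hev | ⟨k, hk⟩
  · obtain ⟨k, hk⟩ : ∃ k, b = 2 * k := by
      obtain ⟨k, hk⟩ := hev; exact ⟨k, by omega⟩
    subst hk
    obtain ⟨m, hm⟩ : ∃ m : ℕ, m = q ^ k := ⟨_, rfl⟩
    have hk1 : 1 ≤ k := by omega
    have hm29 : 29 ≤ m := hm ▸ le_trans hq29 (Nat.le_self_pow (by omega) q)
    have hmm : m * m = 2 ^ c + 1 := by
      rw [hm, ← pow_add, ← two_mul, h]
    have hfac : (m - 1) * (m + 1) = 2 ^ c := by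
      obtain ⟨t, rfl⟩ : ∃ t, m = t + 1 := ⟨m - 1, by omega⟩
      simp only [Nat.add_sub_cancel]
      nlinarith [hmm]
    have hd1 : (m - 1) ∣ 2 ^ c := ⟨m + 1, hfac.symm⟩
    have hd2 : (m + 1) ∣ 2 ^ c := ⟨m - 1, by rw [← hfac]; ring⟩
    obtain ⟨i, hi, hieq⟩ := (Nat.dvd_prime_pow Nat.prime_two).mp hd1
    obtain ⟨j, hj, hjeq⟩ := (Nat.dvd_prime_pow Nat.prime_two).mp hd2
    have hi2 : 2 ≤ i := by
      by_contra hi2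
      interval_cases i <;> omega
    have hj2 : 2 ≤ j := by
      by_contra hj2
      interval_cases j <;> omega
    have h4i : 4 ∣ 2 ^ i := by
      obtain ⟨i', rfl⟩ : ∃ i', i = i' + 2 := ⟨i - 2, by omega⟩
      exact ⟨2 ^ i', by rw [pow_add]; ring⟩
    have h4j : 4 ∣ 2 ^ j := by
      obtain ⟨j', rfl⟩ : ∃ j', j = j' + 2 := ⟨j - 2, by omega⟩
      exact ⟨2 ^ j', by rw [pow_add]; ring⟩
    omega
  · have := pow_odd_mod8 q k hq5
    rw [← hk] at this
    omega

theorem E2 (q : ℕ) (hq29 : 29 ≤ q) (hq5 : q % 8 = 5) (d a : ℕ) (hd : 1 ≤ d)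
    (h : 2 ^ a = q ^ d + 1) : False := by
  have hq4 : q % 4 = 1 := by omega
  have h1 : q ^ d % 4 = 1 := by rw [Nat.pow_mod, hq4, Nat.one_pow]
  have hqd : 29 ≤ q ^ d := le_trans hq29 (Nat.le_self_pow (by omega) q)
  have ha : 2 ≤ a := by
    by_contra ha
    interval_cases a <;> omega
  have : 2 ^ a % 4 = 0 := by
    obtain ⟨b, rfl⟩ : ∃ b, a = b + 2 := ⟨a - 2, by omega⟩
    rw [pow_add]; omega
  omega

theorem G (q : ℕ) (hq29 : 29 ≤ q) (hq5 : q % 8 = 5) (a b c d e f : ℕ)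
    (h2 : (a = 0 ∨ c = 0) ∧ (a = 0 ∨ e = 0) ∧ (c = 0 ∨ e = 0))
    (hqq : (b = 0 ∨ d = 0) ∧ (b = 0 ∨ f = 0) ∧ (d = 0 ∨ f = 0))
    (heq : 2 ^ a * q ^ b = 2 ^ c * q ^ d + 2 ^ e * q ^ f) :
    a = 1 ∧ b = 0 ∧ c = 0 ∧ d = 0 ∧ e = 0 ∧ f = 0 := by
  have hq0 : 0 < q := by omega
  have p2 : ∀ x : ℕ, 1 ≤ 2 ^ x := fun x => Nat.one_le_two_pow
  have pq : ∀ x : ℕ, 1 ≤ q ^ x := fun x => Nat.one_le_pow x q hq0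
  have pq29 : ∀ x : ℕ, 1 ≤ x → 29 ≤ q ^ x := fun x hx =>
    le_trans hq29 (Nat.le_self_pow (by omega) q)
  have hbz : b = 0 := by
    by_contra hb
    have hd0 : d = 0 := by rcases hqq.1 with h'|h' <;> omega
    have hf0 : f = 0 := by rcases hqq.2.1 with h'|h' <;> omega
    subst hd0; subst hf0
    simp only [pow_zero, mul_one] at heq
    have ha0 : a = 0 := by
      by_contra ha
      have hc0 : c = 0 := by rcases h2.1 with h'|h' <;> omega
      have he0 : e = 0 := by rcases h2.2.1 with h'|h' <;> omega
      subst hc0; subst he0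
      simp only [pow_zero] at heq
      -- 2^a * q^b = 2, but q^b ≥ 29 and 2^a ≥ 2
      have h29 : 29 ≤ q ^ b := pq29 b (by omega)
      have h2a : 2 ≤ 2 ^ a := by
        calc 2 = 2^1 := (pow_one 2).symm
        _ ≤ 2^a := Nat.pow_le_pow_right (by omega) (by omega)
      nlinarith
    subst ha0
    simp only [pow_zero, one_mul] at heq
    rcases h2.2.2 with hc0 | he0
    · subst hc0
      simp only [pow_zero, one_mul] at heq
      exact E1 q hq29 hq5 b e (by omega) (by omega)
    · subst he0
      simp only [pow_zero] at heq
      exact E1 q hq29 hq5 b c (by omega) (by omega)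
  subst hbz
  simp only [pow_zero, mul_one] at heq
  have hanz : a ≠ 0 := by
    intro ha0
    subst ha0
    simp only [pow_zero] at heq
    have := p2 c; have := p2 e; have := pq d; have := pq f
    nlinarith
  have hc0 : c = 0 := by rcases h2.1 with h'|h' <;> omega
  have he0 : e = 0 := by rcases h2.2.1 with h'|h' <;> omega
  subst hc0; subst he0
  simp only [pow_zero, one_mul] at heq
  have hd0 : d = 0 := by
    by_contra hd
    have hf0 : f = 0 := by rcases hqq.2.2 with h'|h' <;> omega
    subst hf0
    simp only [pow_zero] at heq
    exact E2 q hq29 hq5 d a (by omega) (by omega)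
  subst hd0
  simp only [pow_zero, one_mul] at heq
  have hf0 : f = 0 := by
    by_contra hf
    exact E2 q hq29 hq5 f a (by omega) (by omega)
  subst hf0
  simp only [pow_zero] at heq
  have ha1 : a = 1 := by
    have : (2:ℕ) ^ a = 2 ^ 1 := by omega
    exact Nat.pow_right_injective (le_refl 2) this
  exact ⟨ha1, rfl, rfl, rfl, rfl, rfl⟩

theorem shape (q : ℕ) (hq : 2 ≤ q) : ∀ n : ℕ, n ≠ 0 →
    (∀ p : ℕ, Nat.Prime p → p ∣ n → p = 2 ∨ p = q) → ∃ α β : ℕ, n = 2 ^ α * q ^ β := by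
  intro n
  induction n using Nat.strong_induction_on with
  | _ n ih =>
    intro hn h
    rcases eq_or_ne n 1 with rfl | hn1
    · exact ⟨0, 0, by norm_num⟩
    · have hp : n.minFac.Prime := Nat.minFac_prime hn1
      have hpd : n.minFac ∣ n := Nat.minFac_dvd n
      obtain ⟨m, hm⟩ := hpd
      have hm0 : m ≠ 0 := by rintro rfl; simp at hm; exact hn hm
      have hmlt : m < n := by
        have := hp.two_le
        rcases Nat.lt_or_ge m n with h'|h'
        · exact h'
        · exfalso
          have h2m : 2 * m ≤ n := by
            calc 2 * m ≤ n.minFac * m := Nat.mul_le_mul_right _ this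
            _ = n := hm.symm
          omega
      obtain ⟨α, β, hab⟩ := ih m hmlt hm0 (fun p hp' hpd' => h p hp' (hm ▸ Dvd.dvd.mul_left hpd' _))
      rcases h n.minFac hp (Nat.minFac_dvd n) with h2 | hq'
      · exact ⟨α + 1, β, by rw [hm, hab, h2]; ring⟩
      · exact ⟨α, β + 1, by rw [hm, hab, hq']; ring⟩

theorem not_unit_nat (K : Type*) [Field K] [NumberField K] (p : ℕ) (hp : 2 ≤ p)
    (h : IsUnit ((p : ℕ) : 𝓞 K)) : False := by
  rw [NumberField.isUnit_iff_norm, RingOfIntegers.coe_norm] at h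
  have he : ((((p:ℕ) : 𝓞 K) : K)) = algebraMap ℚ K ((p:ℕ):ℚ) := by push_cast; simp
  rw [he, Algebra.norm_algebraMap, abs_pow] at h
  have h1 : |((p:ℕ):ℚ)| = p := by simp [abs_of_nonneg]
  rw [h1] at h
  have h2 : (1:ℚ) < (p:ℚ) ^ Module.finrank ℚ K :=
    one_lt_pow₀ (by exact_mod_cast by omega : (1:ℚ) < p) Module.finrank_pos.ne'
  rw [h] at h2; exact lt_irrefl 1 h2

theorem sunit_num_den (K : Type*) [Field K] [NumberField K] (q : ℕ) (hq : Nat.Prime q)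
    (r : ℚ) (hr : IsSUnit ((2 : 𝓞 K) * ((q:ℕ) : 𝓞 K)) ((r : ℚ) : K)) (p : ℕ) (hp : Nat.Prime p)
    (hp2 : p ≠ 2) (hpq : p ≠ q) : ¬ ((p:ℤ) ∣ r.num) ∧ ¬ (p ∣ r.den) := by
  have hnu : ¬ IsUnit ((p : ℕ) : 𝓞 K) := fun h => not_unit_nat K p hp.two_le h
  have hI : (Ideal.span {((p:ℕ):𝓞 K)} : Ideal (𝓞 K)) ≠ ⊤ := by
    rw [Ne, Ideal.span_singleton_eq_top]; exact hnu
  obtain ⟨P, hPmax, hPle⟩ := Ideal.exists_le_maximal _ hI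
  have hpP : ((p:ℕ):𝓞 K) ∈ P := hPle (Ideal.subset_span rfl)
  have hPbot : P ≠ ⊥ := by
    rintro rfl
    rw [Ideal.mem_bot] at hpP
    have h0 : (p:ℕ) = 0 := by exact_mod_cast hpP
    exact absurd h0 hp.pos.ne'
  set v : IsDedekindDomain.HeightOneSpectrum (𝓞 K) := ⟨P, hPmax.isPrime, hPbot⟩ with hv
  -- helper for coprime membership contradiction
  have hcop_contra : ∀ x y : ℤ, IsCoprime x y → ((x:𝓞 K) ∈ P) → ((y:𝓞 K) ∈ P) → False := by
    intro x y hxy hxP hyP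
    obtain ⟨u, w, huw⟩ := hxy
    have : (1 : 𝓞 K) ∈ P := by
      have := congrArg (fun z : ℤ => ((z : 𝓞 K))) huw
      push_cast at this
      rw [← this]
      exact P.add_mem (P.mul_mem_left _ hxP) (P.mul_mem_left _ hyP)
    exact hPmax.ne_top (Ideal.eq_top_of_isUnit_mem P this isUnit_one)
  have hNP : ((2 : 𝓞 K) * ((q:ℕ) : 𝓞 K)) ∉ P := by
    intro hmem
    rcases hPmax.isPrime.mem_or_mem hmem with h2 | hq'
    · apply hcop_contra 2 p _ _ (by exact_mod_cast hpP)
      · exact (Int.isCoprime_iff_gcd_eq_one).mpr (by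
          have : Int.gcd 2 p = Nat.gcd 2 p := rfl
          rw [this]
          exact (Nat.coprime_primes Nat.prime_two hp).mpr (fun h => hp2 h.symm))
      · exact_mod_cast h2
    · apply hcop_contra q p _ _ (by exact_mod_cast hpP)
      · exact (Int.isCoprime_iff_gcd_eq_one).mpr (by
          have : Int.gcd q p = Nat.gcd q p := rfl
          rw [this]
          exact (Nat.coprime_primes hq hp).mpr (fun h => hpq h.symm))
      · exact_mod_cast hq'
  have hval := hr.2 v hNP
  have hden0 : ((r.den:ℕ) : K) ≠ 0 := by
    have : r.den ≠ 0 := r.den_nz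
    exact_mod_cast Nat.cast_ne_zero.mpr this
  -- key valuation equality
  have hmulK : (((r.num:ℤ)) : K) = ((r:ℚ) : K) * ((r.den:ℕ) : K) := by
    rw [Rat.cast_def]
    field_simp
  have key : v.valuation (K := K) (((r.num:ℤ)) : K) = v.valuation (K := K) (((r.den:ℕ)) : K) := by
    rw [hmulK, map_mul, hval, one_mul]
  have hnum_alg : (((r.num:ℤ)) : K) = algebraMap (𝓞 K) K ((r.num : ℤ) : 𝓞 K) := by
    rw [map_intCast]
  have hden_alg : (((r.den:ℕ)) : K) = algebraMap (𝓞 K) K ((r.den : ℕ) : 𝓞 K) := by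
    rw [map_natCast]
  have hiff : (((r.num:ℤ): 𝓞 K) ∈ P) ↔ (((r.den:ℕ): 𝓞 K) ∈ P) := by
    have h1 := IsDedekindDomain.HeightOneSpectrum.valuation_lt_one_iff_dvd (K := K) v ((r.num : ℤ) : 𝓞 K)
    have h2 := IsDedekindDomain.HeightOneSpectrum.valuation_lt_one_iff_dvd (K := K) v ((r.den : ℕ) : 𝓞 K)
    change v.valuation (K := K) (algebraMap (𝓞 K) K ((r.num : ℤ) : 𝓞 K)) < 1 ↔ _ at h1
    rw [← hnum_alg] at h1
    change v.valuation (K := K) (algebraMap (𝓞 K) K ((r.den : ℕ) : 𝓞 K)) < 1 ↔ _ at h2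
    rw [← hden_alg] at h2
    rw [key] at h1
    rw [← Ideal.dvd_span_singleton, ← Ideal.dvd_span_singleton]
    exact (h1.symm.trans h2)
  have hcop : IsCoprime (r.num) ((r.den:ℤ)) := by
    rw [Int.isCoprime_iff_gcd_eq_one]
    exact r.reduced
  have hnum_false : (((r.num:ℤ): 𝓞 K) ∈ P) → False := fun hn =>
    hcop_contra r.num (r.den:ℤ) hcop hn (by exact_mod_cast hiff.mp hn)
  constructor
  · intro ⟨t, ht⟩
    apply hnum_false
    rw [ht]
    push_cast
    exact P.mul_mem_right _ (by exact_mod_cast hpP)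
  · intro ⟨t, ht⟩
    apply hnum_false
    apply hiff.mpr
    rw [ht]
    push_cast
    exact P.mul_mem_right _ (by exact_mod_cast hpP)

theorem tri_lemma (x z : ℤ) (y : ℕ) (h : x + z = (y:ℤ)) :
    y = x.natAbs + z.natAbs ∨ x.natAbs = y + z.natAbs ∨ z.natAbs = y + x.natAbs := by
  omega

theorem fin_lemma (x z : ℤ) (y : ℕ) (h : x + z = (y:ℤ)) (hx : x ≠ 0) (hz : z ≠ 0)
    (hxa : x.natAbs ≤ 2) (hza : z.natAbs ≤ 2) (hy1 : 1 ≤ y) (hy2 : y ≤ 2)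
    (hxy : ¬(x.natAbs = 2 ∧ y = 2)) :
    (x = 2 ∧ y = 1) ∨ (x = -1 ∧ y = 1) ∨ (x = 1 ∧ y = 2) := by
  omega

theorem key_int (q : ℕ) (hq29 : 29 ≤ q) (hq5 : q % 8 = 5) (x z : ℤ) (y : ℕ)
    (hy : 0 < y) (hx : x ≠ 0) (hz : z ≠ 0) (hsum : x + z = (y:ℤ))
    (a b c d e f : ℕ) (hxs : x.natAbs = 2^a * q^b) (hys : y = 2^c * q^d)
    (hzs : z.natAbs = 2^e * q^f)
    (h2xy : ¬((2:ℤ) ∣ x ∧ (2:ℤ) ∣ (y:ℤ))) (h2zy : ¬((2:ℤ) ∣ z ∧ (2:ℤ) ∣ (y:ℤ)))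
    (h2xz : ¬((2:ℤ) ∣ x ∧ (2:ℤ) ∣ z))
    (hqxy : ¬((q:ℤ) ∣ x ∧ (q:ℤ) ∣ (y:ℤ))) (hqzy : ¬((q:ℤ) ∣ z ∧ (q:ℤ) ∣ (y:ℤ)))
    (hqxz : ¬((q:ℤ) ∣ x ∧ (q:ℤ) ∣ z)) :
    (x = 2 ∧ y = 1) ∨ (x = -1 ∧ y = 1) ∨ (x = 1 ∧ y = 2) := by
  have htri := tri_lemma x z y hsum
  have hdx : ∀ (m : ℕ), m ∣ x.natAbs → (m:ℤ) ∣ x :=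
    fun m hm => Int.dvd_natAbs.mp (Int.natCast_dvd_natCast.mpr hm)
  have hdz : ∀ (m : ℕ), m ∣ z.natAbs → (m:ℤ) ∣ z :=
    fun m hm => Int.dvd_natAbs.mp (Int.natCast_dvd_natCast.mpr hm)
  have d2x : a ≠ 0 → (2:ℤ) ∣ x := fun ha =>
    hdx 2 (hxs ▸ dvd_mul_of_dvd_left (dvd_pow_self 2 ha) _)
  have d2z : e ≠ 0 → (2:ℤ) ∣ z := fun he =>
    hdz 2 (hzs ▸ dvd_mul_of_dvd_left (dvd_pow_self 2 he) _)
  have d2y : c ≠ 0 → (2:ℤ) ∣ (y:ℤ) := fun hc =>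
    Int.natCast_dvd_natCast.mpr (hys ▸ dvd_mul_of_dvd_left (dvd_pow_self 2 hc) _)
  have dqx : b ≠ 0 → (q:ℤ) ∣ x := fun hb =>
    hdx q (hxs ▸ dvd_mul_of_dvd_right (dvd_pow_self q hb) _)
  have dqz : f ≠ 0 → (q:ℤ) ∣ z := fun hf =>
    hdz q (hzs ▸ dvd_mul_of_dvd_right (dvd_pow_self q hf) _)
  have dqy : d ≠ 0 → (q:ℤ) ∣ (y:ℤ) := fun hd =>
    Int.natCast_dvd_natCast.mpr (hys ▸ dvd_mul_of_dvd_right (dvd_pow_self q hd) _)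
  have pac : a = 0 ∨ c = 0 := by
    by_contra hcon; push_neg at hcon
    exact h2xy ⟨d2x hcon.1, d2y hcon.2⟩
  have pae : a = 0 ∨ e = 0 := by
    by_contra hcon; push_neg at hcon
    exact h2xz ⟨d2x hcon.1, d2z hcon.2⟩
  have pce : c = 0 ∨ e = 0 := by
    by_contra hcon; push_neg at hcon
    exact h2zy ⟨d2z hcon.2, d2y hcon.1⟩
  have pbd : b = 0 ∨ d = 0 := by
    by_contra hcon; push_neg at hcon
    exact hqxy ⟨dqx hcon.1, dqy hcon.2⟩
  have pbf : b = 0 ∨ f = 0 := by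
    by_contra hcon; push_neg at hcon
    exact hqxz ⟨dqx hcon.1, dqz hcon.2⟩
  have pdf : d = 0 ∨ f = 0 := by
    by_contra hcon; push_neg at hcon
    exact hqzy ⟨dqz hcon.2, dqy hcon.1⟩
  clear hdx hdz d2x d2z d2y dqx dqz dqy h2xy h2zy h2xz hqxy hqzy hqxz
  rcases htri with hcase | hcase | hcase
  · have heq : 2^c * q^d = 2^a * q^b + 2^e * q^f := by rw [← hxs, ← hys, ← hzs]; exact hcase
    obtain ⟨h1, h2', h3, h4, h5, h6⟩ :=
      G q hq29 hq5 c d a b e f ⟨pac.symm, pce, pae⟩ ⟨pbd.symm, pdf, pbf⟩ heq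
    subst h1 h2' h3 h4 h5 h6
    norm_num at hxs hys hzs
    exact fin_lemma x z y hsum hx hz (by omega) (by omega) (by omega) (by omega) (by omega)
  · have heq : 2^a * q^b = 2^c * q^d + 2^e * q^f := by rw [← hxs, ← hys, ← hzs]; exact hcase
    obtain ⟨h1, h2', h3, h4, h5, h6⟩ :=
      G q hq29 hq5 a b c d e f ⟨pac, pae, pce⟩ ⟨pbd, pbf, pdf⟩ heq
    subst h1 h2' h3 h4 h5 h6
    norm_num at hxs hys hzs
    exact fin_lemma x z y hsum hx hz (by omega) (by omega) (by omega) (by omega) (by omega)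
  · have heq : 2^e * q^f = 2^c * q^d + 2^a * q^b := by rw [← hxs, ← hys, ← hzs]; exact hcase
    obtain ⟨h1, h2', h3, h4, h5, h6⟩ :=
      G q hq29 hq5 e f c d a b ⟨pce.symm, pae.symm, pac.symm⟩ ⟨pdf.symm, pbf.symm, pbd.symm⟩ heq
    subst h1 h2' h3 h4 h5 h6
    norm_num at hxs hys hzs
    exact fin_lemma x z y hsum hx hz (by omega) (by omega) (by omega) (by omega) (by omega)

end Auxiliary

/-- For `K = ℚ(√-d)` as in Density Theorem 1 and `S` the primes dividing `2q`, a solution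
`(λ, μ)` of the `S`-unit equation `λ + μ = 1` has `λ ∈ ℚ` iff `λ ∈ {2, -1, 1/2}`. -/
theorem rational_solutions_S_unit_equation
    (d : ℕ) (hd : Squarefree d) (hd2 : 2 < d)
    (hdmod : (-(d : ℤ)) % 4 = 2 ∨ (-(d : ℤ)) % 4 = 3)
    (q : ℕ) [hqp : Fact (Nat.Prime q)] (hq29 : 29 ≤ q) (hq5 : q % 8 = 5)
    (hleg : legendreSym q (-(d : ℤ)) = -1)
    (K : Type*) [Field K] [NumberField K]
    (sqd : K) (hsqd : sqd ^ 2 = -(d : K))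
    (hgen : ∀ x : K, ∃ u v : ℚ, x = (u : K) + (v : K) * sqd)
    (lam mu : K) (hlam : IsSUnit ((2 : 𝓞 K) * (q : 𝓞 K)) lam)
    (hmu : IsSUnit ((2 : 𝓞 K) * (q : 𝓞 K)) mu) (hsum : lam + mu = 1) :
    (∃ r : ℚ, lam = (r : K)) ↔ (lam = 2 ∨ lam = -1 ∨ lam = 1 / 2) := by
  have hq : Nat.Prime q := hqp.out
  constructor
  · rintro ⟨r, rfl⟩
    have hmu_eq : mu = ((1 - r : ℚ) : K) := by
      push_cast
      linear_combination hsum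
    rw [hmu_eq] at hmu
    set s : ℚ := 1 - r with hs_def
    have hr0 : r ≠ 0 := by
      intro h0; apply hlam.1; rw [h0]; push_cast; rfl
    have hs0 : s ≠ 0 := by
      intro h0; apply hmu.1; rw [h0]; push_cast; rfl
    -- prime support facts
    have hrfacts := fun (p : ℕ) (hp : Nat.Prime p) (hp2 : p ≠ 2) (hpq : p ≠ q) =>
      sunit_num_den K q hq r hlam p hp hp2 hpq
    have hsfacts := fun (p : ℕ) (hp : Nat.Prime p) (hp2 : p ≠ 2) (hpq : p ≠ q) =>
      sunit_num_den K q hq s hmu p hp hp2 hpq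
    -- shapes
    have hxnz : r.num.natAbs ≠ 0 := by
      simp [Int.natAbs_eq_zero, Rat.num_ne_zero, hr0]
    have hznz : s.num.natAbs ≠ 0 := by
      simp [Int.natAbs_eq_zero, Rat.num_ne_zero, hs0]
    obtain ⟨a, b, hxs⟩ := shape q hq.two_le r.num.natAbs hxnz (by
      intro p hp hpd
      by_contra hcon; push_neg at hcon
      exact (hrfacts p hp hcon.1 hcon.2).1 (Int.dvd_natAbs.mp (Int.natCast_dvd_natCast.mpr hpd)))
    obtain ⟨c, d, hys⟩ := shape q hq.two_le r.den r.den_nz (by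
      intro p hp hpd
      by_contra hcon; push_neg at hcon
      exact (hrfacts p hp hcon.1 hcon.2).2 hpd)
    obtain ⟨e, f, hzs⟩ := shape q hq.two_le s.num.natAbs hznz (by
      intro p hp hpd
      by_contra hcon; push_neg at hcon
      exact (hsfacts p hp hcon.1 hcon.2).1 (Int.dvd_natAbs.mp (Int.natCast_dvd_natCast.mpr hpd)))
    -- cross-multiplied identity
    have hrs1 : r + s = 1 := by rw [hs_def]; ring
    have hdr0 : ((r.den:ℚ)) ≠ 0 := by exact_mod_cast r.den_nz
    have hds0 : ((s.den:ℚ)) ≠ 0 := by exact_mod_cast s.den_nz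
    have e1 : (r.num:ℚ) = r * (r.den:ℚ) := (div_eq_iff hdr0).mp (Rat.num_div_den r)
    have e2 : (s.num:ℚ) = s * (s.den:ℚ) := (div_eq_iff hds0).mp (Rat.num_div_den s)
    have hcross : r.num * (s.den:ℤ) + s.num * (r.den:ℤ) = (r.den:ℤ) * (s.den:ℤ) := by
      have : (r.num:ℚ) * (s.den:ℚ) + (s.num:ℚ) * (r.den:ℚ) = (r.den:ℚ) * (s.den:ℚ) := by
        rw [e1, e2]
        linear_combination ((r.den:ℚ) * (s.den:ℚ)) * hrs1
      exact_mod_cast this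
    have hcopr : IsCoprime ((r.den:ℤ)) r.num := by
      rw [isCoprime_comm, Int.isCoprime_iff_gcd_eq_one]
      exact r.reduced
    have hcops : IsCoprime ((s.den:ℤ)) s.num := by
      rw [isCoprime_comm, Int.isCoprime_iff_gcd_eq_one]
      exact s.reduced
    have hdd : r.den = s.den := by
      have hd1 : (r.den:ℤ) ∣ (s.den:ℤ) := by
        apply hcopr.dvd_of_dvd_mul_left
        exact ⟨(s.den:ℤ) - s.num, by linear_combination hcross⟩
      have hd2 : (s.den:ℤ) ∣ (r.den:ℤ) := by
        apply hcops.dvd_of_dvd_mul_left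
        exact ⟨(r.den:ℤ) - r.num, by linear_combination hcross⟩
      exact Nat.dvd_antisymm (Int.natCast_dvd_natCast.mp hd1) (Int.natCast_dvd_natCast.mp hd2)
    have hden0 : ((r.den:ℤ)) ≠ 0 := by exact_mod_cast r.den_nz
    have hsum' : r.num + s.num = (r.den:ℤ) := by
      have h' : (r.num + s.num) * (r.den:ℤ) = (r.den:ℤ) * (r.den:ℤ) := by
        rw [← hdd] at hcross; linear_combination hcross
      exact mul_right_cancel₀ hden0 h'
    -- pairwise divisibility exclusions
    have hgcd_r : Nat.gcd r.num.natAbs r.den = 1 := r.reduced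
    have hgcd_s : Nat.gcd s.num.natAbs s.den = 1 := s.reduced
    rw [← hdd] at hgcd_s
    have hexcl : ∀ m : ℕ, 2 ≤ m → ¬((m:ℤ) ∣ r.num ∧ (m:ℤ) ∣ (r.den:ℤ)) := by
      rintro m hm ⟨h1, h2⟩
      have hh1 : m ∣ r.num.natAbs := Int.natCast_dvd_natCast.mp (Int.dvd_natAbs.mpr h1)
      have hh2 : m ∣ r.den := Int.natCast_dvd_natCast.mp h2
      have := Nat.dvd_gcd hh1 hh2
      rw [hgcd_r] at this
      exact absurd (Nat.le_of_dvd one_pos this) (by omega)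
    have hexcl' : ∀ m : ℕ, 2 ≤ m → ¬((m:ℤ) ∣ s.num ∧ (m:ℤ) ∣ (r.den:ℤ)) := by
      rintro m hm ⟨h1, h2⟩
      have hh1 : m ∣ s.num.natAbs := Int.natCast_dvd_natCast.mp (Int.dvd_natAbs.mpr h1)
      have hh2 : m ∣ r.den := Int.natCast_dvd_natCast.mp h2
      have := Nat.dvd_gcd hh1 hh2
      rw [hgcd_s] at this
      exact absurd (Nat.le_of_dvd one_pos this) (by omega)
    have hexclxz : ∀ m : ℕ, 2 ≤ m → ¬((m:ℤ) ∣ r.num ∧ (m:ℤ) ∣ s.num) := by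
      rintro m hm ⟨h1, h2⟩
      exact hexcl m hm ⟨h1, hsum' ▸ dvd_add h1 h2⟩
    have hres := key_int q hq29 hq5 r.num s.num r.den r.pos
      (Rat.num_ne_zero.mpr hr0) (Rat.num_ne_zero.mpr hs0) hsum'
      a b c d e f hxs hys hzs
      (hexcl 2 le_rfl) (hexcl' 2 le_rfl) (hexclxz 2 le_rfl)
      (hexcl q hq.two_le) (hexcl' q hq.two_le) (hexclxz q hq.two_le)
    have hrval : r = 2 ∨ r = -1 ∨ r = 1/2 := by
      rcases hres with ⟨h1, h2⟩ | ⟨h1, h2⟩ | ⟨h1, h2⟩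
      · left
        rw [← Rat.num_div_den r, h1, h2]; norm_num
      · right; left
        rw [← Rat.num_div_den r, h1, h2]; norm_num
      · right; right
        rw [← Rat.num_div_den r, h1, h2]; norm_num
    rcases hrval with h | h | h
    · left; rw [h]; push_cast; ring
    · right; left; rw [h]; push_cast; ring
    · right; right; rw [h]; push_cast; ring
  · rintro (h | h | h)
    · exact ⟨2, by rw [h]; push_cast; ring⟩
    · exact ⟨-1, by rw [h]; push_cast; ring⟩
    · exact ⟨1/2, by rw [h]; push_cast; ring⟩
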